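/- arXiv:2207.03043 — 7 statements merged into one kernel-verified Lean document; each statement's English description precedes it below -/
import Mathlib

section
/- For all real numbers R > 0 and η ≥ 0, one has cosh(√(tanh R · η)) ≤ cosh η + tanh R · sinh η. -/
theorem hyperbolic_cosh_sqrt_ineq (R η : ℝ) (hR : 0 < R) (hη : 0 ≤ η) :
    Real.cosh (Real.sqrt (Real.tanh R * η)) ≤ Real.cosh η + Real.tanh R * Real.sinh η := by
  set t := Real.tanh R with ht
  have hcoshR := Real.cosh_pos R
  have hsinhR : 0 ≤ Real.sinh R := by
    nlinarith [Real.sinh_eq R, Real.exp_le_exp.mpr (show -R ≤ R by linarith)]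
  have hsc : Real.sinh R < Real.cosh R := by
    have := Real.exp_pos (-R)
    nlinarith [Real.cosh_eq R, Real.sinh_eq R]
  have ht0 : 0 ≤ t := by
    rw [ht, Real.tanh_eq_sinh_div_cosh]
    positivity
  have ht1 : t ≤ 1 := by
    rw [ht, Real.tanh_eq_sinh_div_cosh, div_le_one hcoshR]
    exact hsc.le
  have hx0 : 0 ≤ t * η := mul_nonneg ht0 hη
  have h1 : Real.cosh (Real.sqrt (t * η)) ≤ Real.exp (t * η / 2) := by
    have := Real.cosh_le_exp_half_sq (Real.sqrt (t * η))
    rwa [Real.sq_sqrt hx0] at this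
  have h2 : Real.exp (t * η / 2) ≤ (1 - t) * 1 + t * Real.exp (η / 2) := by
    have := convexOn_exp.2 (Set.mem_univ 0) (Set.mem_univ (η / 2))
      (by linarith : (0:ℝ) ≤ 1 - t) ht0 (by ring)
    have e : (1 - t) • (0:ℝ) + t • (η / 2) = t * η / 2 := by
      simp [smul_eq_mul]; ring
    rw [e] at this
    simpa [smul_eq_mul] using this
  have h3 : Real.exp (η / 2) ≤ 1 + Real.sinh η := by
    have he : Real.exp (η / 2) * Real.exp (η / 2) = Real.exp η := by
      rw [← Real.exp_add]; ring_nf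
    have hen : Real.exp (-η) ≤ 1 := Real.exp_le_one_iff.mpr (by linarith)
    nlinarith [Real.sinh_eq η, sq_nonneg (Real.exp (η / 2) - 1), Real.exp_pos (η / 2)]
  have h4 : (1:ℝ) ≤ Real.cosh η := Real.one_le_cosh η
  nlinarith [mul_le_mul_of_nonneg_left h3 ht0]
end

section
/- For all real numbers R with 0 < R ≤ π/4 and all η with 0 ≤ η ≤ π/4, one has cos(√(tan R · η)) ≥ cos η − tan R · sin η. -/
theorem spherical_cos_sqrt_ineq (R η : ℝ) (hR0 : 0 < R) (hR : R ≤ Real.pi / 4)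
    (hη0 : 0 ≤ η) (hη : η ≤ Real.pi / 4) :
    Real.cos (Real.sqrt (Real.tan R * η)) ≥ Real.cos η - Real.tan R * Real.sin η := by
  have hpi := Real.pi_gt_three
  have hpi4 := Real.pi_lt_d2
  have ht : 0 < Real.tan R := Real.tan_pos_of_pos_of_lt_pi_div_two hR0 (by linarith)
  have htη : 0 ≤ Real.tan R * η := mul_nonneg ht.le hη0
  have h1 : 1 - Real.tan R * η / 2 ≤ Real.cos (Real.sqrt (Real.tan R * η)) := by
    have := Real.one_sub_sq_div_two_le_cos (x := Real.sqrt (Real.tan R * η))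
    rwa [Real.sq_sqrt htη] at this
  have hsin : η / 2 ≤ Real.sin η := by
    have h := Real.mul_le_sin hη0 (by linarith)
    have h2 : η / 2 ≤ 2 / Real.pi * η := by
      rw [div_mul_eq_mul_div, le_div_iff₀ Real.pi_pos]; nlinarith
    linarith
  have hcos : Real.cos η ≤ 1 := Real.cos_le_one η
  nlinarith [mul_le_mul_of_nonneg_left hsin ht.le]
end

section
/- If a triangle in the Euclidean plane has vertices y₀, y₁, p with the angle at y₁ at most π/2, the side y₀y₁ of length R > 0, and the side y₀p of length at least R + η for some η ≥ 0, then the side y₁p has length at least √(2Rη). -/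
theorem euclidean_pythagorean_type (y₀ y₁ p : EuclideanSpace ℝ (Fin 2)) (R η : ℝ)
    (hR : 0 < R) (hη : 0 ≤ η)
    (hangle : EuclideanGeometry.angle y₀ y₁ p ≤ Real.pi / 2)
    (hside : dist y₀ y₁ = R) (hfar : dist y₀ p ≥ R + η) :
    dist y₁ p ≥ Real.sqrt (2 * R * η) := by
  have hcos : 0 ≤ Real.cos (EuclideanGeometry.angle y₀ y₁ p) :=
    Real.cos_nonneg_of_mem_Icc ⟨by linarith [EuclideanGeometry.angle_nonneg y₀ y₁ p,
      Real.pi_pos], hangle⟩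
  have hlaw := EuclideanGeometry.law_cos y₀ y₁ p
  have h1 : (R + η) ^ 2 ≤ dist y₀ p ^ 2 := by
    apply pow_le_pow_left₀ (by positivity) hfar
  have h2 : 2 * R * η ≤ dist y₁ p ^ 2 := by
    nlinarith [dist_nonneg (x := y₀) (y := y₁), dist_nonneg (x := p) (y := y₁),
      dist_comm p y₁, dist_comm y₀ y₁, sq_nonneg η,
      mul_nonneg (mul_nonneg (mul_nonneg (by norm_num : (0:ℝ) ≤ 2)
        (dist_nonneg (x := y₀) (y := y₁))) (dist_nonneg (x := p) (y := y₁))) hcos]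
  calc Real.sqrt (2 * R * η) ≤ Real.sqrt (dist y₁ p ^ 2) := Real.sqrt_le_sqrt h2
    _ = dist y₁ p := Real.sqrt_sq dist_nonneg
end

section
/- Let B ⊂ ℝⁿ be the closed Euclidean ball of radius t > 0 centered at x₀, and let H⁺ be a closed half-space whose boundary hyperplane intersects the interior of B, such that the cap C = H⁺ ∩ B has depth at least δ, where 0 < δ ≤ t (the depth is the maximal distance of points of C from the boundary hyperplane of H⁺). Then the Lebesgue measure of C is at least (2·κ_{n-1}/(n+1)) · t^{(n-1)/2} · δ^{(n+1)/2}, where κ_{n-1} is the volume of the (n−1)-dimensional Euclidean unit ball. -/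
open scoped RealInnerProductSpace

open MeasureTheory Metric Set

/-- `kappa k` is the volume of the `k`-dimensional Euclidean unit ball. -/
noncomputable def kappa (k : ℕ) : ℝ :=
  (MeasureTheory.volume (Metric.closedBall (0 : EuclideanSpace ℝ (Fin k)) 1)).toReal

section Aux

variable {m : ℕ}

lemma aux_integral (t δ : ℝ) (ht : 0 < t) (hδ0 : 0 < δ) (hδt : δ ≤ t) (m : ℕ) :
    ∫ a in Set.Icc (t - δ) t, (Real.sqrt (t * (t - a))) ^ m
      = t ^ ((m : ℝ) / 2) * (δ ^ ((m : ℝ) / 2 + 1) / ((m : ℝ) / 2 + 1)) := by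
  have hle : t - δ ≤ t := by linarith
  have hq0 : (0 : ℝ) ≤ (m : ℝ) / 2 := by positivity
  have hq1 : ((m : ℝ) / 2 + 1) ≠ 0 := by positivity
  rw [MeasureTheory.integral_Icc_eq_integral_Ioc,
    ← intervalIntegral.integral_of_le hle]
  have hcongr : Set.EqOn (fun a => (Real.sqrt (t * (t - a))) ^ m)
      (fun a => t ^ ((m : ℝ) / 2) * (t - a) ^ ((m : ℝ) / 2)) (Set.uIcc (t - δ) t) := by
    intro a ha
    rw [Set.uIcc_of_le hle] at ha
    obtain ⟨ha1, ha2⟩ := ha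
    have h1 : (0 : ℝ) ≤ t - a := by linarith
    have h2 : (0 : ℝ) ≤ t * (t - a) := by positivity
    simp only
    rw [← Real.rpow_natCast (Real.sqrt (t * (t - a))) m, Real.sqrt_eq_rpow,
      ← Real.rpow_mul h2, ← Real.mul_rpow ht.le h1]
    congr 1
    push_cast
    ring
  rw [intervalIntegral.integral_congr hcongr, intervalIntegral.integral_const_mul]
  have hsub := intervalIntegral.integral_comp_sub_left (a := t - δ) (b := t)
    (fun s => s ^ ((m : ℝ) / 2)) t
  simp only [sub_self, sub_sub_cancel] at hsub
  rw [hsub, integral_rpow (Or.inl (by linarith))]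
  rw [Real.zero_rpow hq1]
  ring

end Aux

/-- Volume lower bound for a Euclidean cap of depth at least `δ`. The half-space is
`{x | c ≤ ⟪u, x⟫}` with unit normal `u`; its boundary hyperplane meets the interior of the
ball, and the cap contains a point at distance at least `δ` from the boundary hyperplane. -/
theorem euclidean_cap_volume_lower_bound (n : ℕ) (hn : 2 ≤ n)
    (x₀ u : EuclideanSpace ℝ (Fin n)) (hu : ‖u‖ = 1) (c t δ : ℝ)
    (ht : 0 < t) (hδ0 : 0 < δ) (hδt : δ ≤ t)
    (hbd : ∃ y ∈ Metric.ball x₀ t, ⟪u, y⟫ = c)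
    (hdepth : ∃ x ∈ Metric.closedBall x₀ t, c + δ ≤ ⟪u, x⟫) :
    MeasureTheory.volume {x | x ∈ Metric.closedBall x₀ t ∧ c ≤ ⟪u, x⟫} ≥
      ENNReal.ofReal
        (2 * kappa (n - 1) / (n + 1) * t ^ (((n : ℝ) - 1) / 2) * δ ^ (((n : ℝ) + 1) / 2)) := by
  classical
  obtain ⟨m, rfl⟩ : ∃ m, n = m + 1 := ⟨n - 1, by omega⟩
  -- Step 1: from the depth hypothesis, `c ≤ ⟪u, x₀⟫ + t - δ`.
  obtain ⟨x, hx, hxd⟩ := hdepth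
  have hCS : ⟪u, x - x₀⟫ ≤ t := by
    calc ⟪u, x - x₀⟫ ≤ ‖u‖ * ‖x - x₀‖ := real_inner_le_norm _ _
      _ ≤ t := by
          rw [hu, one_mul]
          simpa [Metric.mem_closedBall, dist_eq_norm] using hx
  have hsub : ⟪u, x - x₀⟫ = ⟪u, x⟫ - ⟪u, x₀⟫ := inner_sub_right u x x₀
  have hc : c ≤ ⟪u, x₀⟫ + t - δ := by linarith
  -- Step 2: orthonormal basis with first vector `u`.
  have hcard : Module.finrank ℝ (EuclideanSpace ℝ (Fin (m + 1)))
      = Fintype.card (Fin (m + 1)) := by simp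
  have horth : Orthonormal ℝ (Set.restrict {(0 : Fin (m + 1))} (fun _ => u)) := by
    constructor
    · intro i; exact hu
    · intro i j hij
      exact absurd (Subtype.ext (by
        have hi := i.2; have hj := j.2
        simp only [Set.mem_singleton_iff] at hi hj
        rw [hi, hj])) hij
  obtain ⟨b, hb⟩ := horth.exists_orthonormalBasis_extension_of_card_eq hcard
  have hb0 : b 0 = u := by simpa using hb 0 rfl
  set e : EuclideanSpace ℝ (Fin (m + 1)) ≃ₗᵢ[ℝ] EuclideanSpace ℝ (Fin (m + 1)) :=
    b.repr.symm with he
  have he0 : e (EuclideanSpace.single 0 1) = u := by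
    rw [he, ← b.repr_self 0, LinearIsometryEquiv.symm_apply_apply, hb0]
  -- The affine measure preserving map
  set T : EuclideanSpace ℝ (Fin (m + 1)) → EuclideanSpace ℝ (Fin (m + 1)) :=
    fun y => x₀ + e y with hT
  have hTmp : MeasurePreserving T volume volume :=
    (measurePreserving_add_left volume x₀).comp e.measurePreserving
  -- cap is measurable
  set cap : Set (EuclideanSpace ℝ (Fin (m + 1))) :=
    {x | x ∈ Metric.closedBall x₀ t ∧ c ≤ ⟪u, x⟫} with hcap
  have hcapmeas : MeasurableSet cap := by
    have : cap = Metric.closedBall x₀ t ∩ {x | c ≤ ⟪u, x⟫} := rfl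
    rw [this]
    exact measurableSet_closedBall.inter
      ((isClosed_le continuous_const (continuous_const.inner continuous_id)).measurableSet)
  -- the parabolic region in ℝ × (Fin m → ℝ)
  set P : Set (ℝ × (Fin m → ℝ)) :=
    {p | p.1 ∈ Set.Icc (t - δ) t ∧ ∑ i, (p.2 i) ^ 2 ≤ t * (t - p.1)} with hP
  have hPmeas : MeasurableSet P := by
    apply MeasurableSet.inter
    · exact measurable_fst measurableSet_Icc
    · have hmf : Measurable fun p : ℝ × (Fin m → ℝ) => ∑ i, (p.2 i) ^ 2 := by fun_prop
      have hmg : Measurable fun p : ℝ × (Fin m → ℝ) => t * (t - p.1) := by fun_prop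
      exact measurableSet_le hmf hmg
  set φ := (MeasurableEquiv.toLp 2 (Fin (m + 1) → ℝ)).symm with hφ
  set ψ := MeasurableEquiv.piFinSuccAbove (fun _ : Fin (m + 1) => ℝ) 0 with hψ
  set Q : Set (EuclideanSpace ℝ (Fin (m + 1))) := φ ⁻¹' (ψ ⁻¹' P) with hQ
  -- Q sits inside T ⁻¹' cap
  have hQsub : Q ⊆ T ⁻¹' cap := by
    intro y hy
    have hy' : (y 0 ∈ Set.Icc (t - δ) t) ∧ ∑ i : Fin m, (y (i.succ)) ^ 2 ≤ t * (t - y 0) := by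
      simpa [hQ, hP, hψ, hφ, MeasurableEquiv.piFinSuccAbove, Fin.zero_succAbove, Fin.tail] using hy
    obtain ⟨⟨hy1, hy2⟩, hy3⟩ := hy'
    have hy0nn : 0 ≤ y 0 := by linarith
    have hnorm : ‖y‖ ≤ t := by
      rw [EuclideanSpace.norm_eq]
      simp only [Real.norm_eq_abs, sq_abs]
      have hsum : ∑ i, y i ^ 2 = y 0 ^ 2 + ∑ i : Fin m, y (i.succ) ^ 2 := by
        rw [Fin.sum_univ_succ]
      have : ∑ i, y i ^ 2 ≤ t ^ 2 := by nlinarith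
      calc Real.sqrt (∑ i, y i ^ 2) ≤ Real.sqrt (t ^ 2) := Real.sqrt_le_sqrt this
        _ = t := by rw [Real.sqrt_sq ht.le]
    have hinner : ⟪u, e y⟫ = y 0 := by
      rw [← he0, LinearIsometryEquiv.inner_map_map]
      simp [EuclideanSpace.inner_single_left]
    constructor
    · simpa [hT, Metric.mem_closedBall, dist_eq_norm] using hnorm
    · have : ⟪u, x₀ + e y⟫ = ⟪u, x₀⟫ + ⟪u, e y⟫ := inner_add_right u x₀ (e y)
      simp only [hT, Set.mem_setOf_eq]
      rw [this, hinner]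
      linarith
  -- volume of cap is at least volume of P
  have hvol1 : MeasureTheory.volume cap ≥ MeasureTheory.volume P := by
    calc MeasureTheory.volume P
        = MeasureTheory.volume (ψ ⁻¹' P) :=
          ((MeasureTheory.volume_preserving_piFinSuccAbove
            (fun _ : Fin (m + 1) => ℝ) 0).measure_preimage
            hPmeas.nullMeasurableSet).symm
      _ = MeasureTheory.volume Q :=
          ((EuclideanSpace.volume_preserving_symm_measurableEquiv_toLp (Fin (m + 1))).measure_preimage
            (hPmeas.preimage ψ.measurable).nullMeasurableSet).symm
      _ ≤ MeasureTheory.volume (T ⁻¹' cap) := measure_mono hQsub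
      _ = MeasureTheory.volume cap := hTmp.measure_preimage hcapmeas.nullMeasurableSet
  -- compute volume of P
  set B : ENNReal := MeasureTheory.volume (Metric.closedBall (0 : EuclideanSpace ℝ (Fin m)) 1)
    with hB
  have hslice : ∀ a : ℝ, MeasureTheory.volume (Prod.mk a ⁻¹' P)
      = Set.indicator (Set.Icc (t - δ) t)
        (fun a => ENNReal.ofReal ((Real.sqrt (t * (t - a))) ^ m) * B) a := by
    intro a
    by_cases ha : a ∈ Set.Icc (t - δ) t
    · rw [Set.indicator_of_mem ha]
      have haR : (0 : ℝ) ≤ t * (t - a) := by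
        obtain ⟨h1, h2⟩ := ha; have : (0:ℝ) ≤ t - a := by linarith
        positivity
      have hsliceset : Prod.mk a ⁻¹' P
          = ((MeasurableEquiv.toLp 2 (Fin m → ℝ)).symm).symm ⁻¹'
            (Metric.closedBall 0 (Real.sqrt (t * (t - a)))) := by
        ext z
        simp only [hP, Set.mem_preimage, Set.mem_setOf_eq, Metric.mem_closedBall,
          dist_zero_right, ha, true_and]
        rw [EuclideanSpace.norm_eq]
        simp only [Real.norm_eq_abs, sq_abs]
        have : ∀ i, ((((MeasurableEquiv.toLp 2 (Fin m → ℝ)).symm).symm z) i) = z i := fun i => rfl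
        simp only [this]
        exact (Real.sqrt_le_sqrt_iff haR).symm
      rw [hsliceset,
        ((EuclideanSpace.volume_preserving_symm_measurableEquiv_toLp (Fin m)).symm).measure_preimage
          measurableSet_closedBall.nullMeasurableSet,
        MeasureTheory.Measure.addHaar_closedBall' _ _ (Real.sqrt_nonneg _)]
      simp [hB, finrank_euclideanSpace_fin]
    · rw [Set.indicator_of_notMem ha]
      have : Prod.mk a ⁻¹' P = ∅ := by
        ext z
        simp only [hP, Set.mem_preimage, Set.mem_setOf_eq, Set.mem_empty_iff_false, iff_false,
          not_and]
        exact fun h => absurd h ha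
      simp [this]
  have hBne : B ≠ ⊤ := (measure_closedBall_lt_top).ne
  have hvolP : MeasureTheory.volume P
      = ENNReal.ofReal (∫ a in Set.Icc (t - δ) t, (Real.sqrt (t * (t - a))) ^ m) * B := by
    rw [MeasureTheory.Measure.volume_eq_prod, MeasureTheory.Measure.prod_apply hPmeas]
    calc ∫⁻ a, MeasureTheory.volume (Prod.mk a ⁻¹' P)
        = ∫⁻ a, Set.indicator (Set.Icc (t - δ) t)
            (fun a => ENNReal.ofReal ((Real.sqrt (t * (t - a))) ^ m) * B) a := by
          exact lintegral_congr hslice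
      _ = ∫⁻ a in Set.Icc (t - δ) t,
            ENNReal.ofReal ((Real.sqrt (t * (t - a))) ^ m) * B :=
          lintegral_indicator measurableSet_Icc _
      _ = (∫⁻ a in Set.Icc (t - δ) t,
            ENNReal.ofReal ((Real.sqrt (t * (t - a))) ^ m)) * B :=
          lintegral_mul_const' B _ hBne
      _ = ENNReal.ofReal (∫ a in Set.Icc (t - δ) t, (Real.sqrt (t * (t - a))) ^ m) * B := by
          have hcont : Continuous fun a : ℝ => (Real.sqrt (t * (t - a))) ^ m := by
            apply Continuous.pow
            exact Real.continuous_sqrt.comp (continuous_const.mul (continuous_const.sub continuous_id))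
          rw [MeasureTheory.ofReal_integral_eq_lintegral_ofReal hcont.integrableOn_Icc
            (Filter.Eventually.of_forall fun a => pow_nonneg (Real.sqrt_nonneg _) m)]
  -- final computation
  have hq1 : (0:ℝ) < (m : ℝ) / 2 + 1 := by positivity
  have hkap : (0:ℝ) ≤ kappa m := ENNReal.toReal_nonneg
  have hBeq : B = ENNReal.ofReal (kappa m) := by
    rw [hB, kappa, ENNReal.ofReal_toReal (measure_closedBall_lt_top).ne]
  have htpow : (0:ℝ) ≤ t ^ ((m:ℝ)/2) := Real.rpow_nonneg ht.le _
  have hdpow : (0:ℝ) ≤ δ ^ ((m:ℝ)/2 + 1) := Real.rpow_nonneg hδ0.le _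
  have hval : MeasureTheory.volume P = ENNReal.ofReal
      (2 * kappa ((m + 1) - 1) / ((m + 1 : ℕ) + 1) * t ^ ((((m + 1 : ℕ) : ℝ) - 1) / 2)
        * δ ^ ((((m + 1 : ℕ) : ℝ) + 1) / 2)) := by
    rw [hvolP, aux_integral t δ ht hδ0 hδt m, hBeq, ← ENNReal.ofReal_mul (by positivity)]
    congr 1
    have hm1 : (m + 1 : ℕ) - 1 = m := by omega
    rw [hm1]
    push_cast
    rw [show (((m:ℝ) + 1) - 1) / 2 = (m:ℝ)/2 by ring,
      show (((m:ℝ) + 1) + 1) / 2 = (m:ℝ)/2 + 1 by ring]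
    field_simp
    ring
  rw [← hval] at *
  exact le_trans (le_of_eq rfl) hvol1
end

section
/- Let r > 0, w₁, w₂ ∈ ℝⁿ with 0 < ‖w₁ − w₂‖ < 2r, let p be a point on the intersection of the boundary spheres ∂B(w₁,r) ∩ ∂B(w₂,r), and for i = 1, 2 let H_i⁺ = {x ∈ ℝⁿ : ⟨x, p − w_i⟩ ≥ ⟨p, p − w_i⟩}. If the angle ∠(w₁, p, w₂) = α satisfies 0 < α₀ ≤ α ≤ α₁ < π, then the Lebesgue measure of conv(B(w₁,r) ∪ B(w₂,r)) ∩ H₁⁺ ∩ H₂⁺ is at least c_n · rⁿ · α₀^{n+1} · cos(α₁/2), where c_n = 2^{−4n}·n^{−n}. -/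
open scoped RealInnerProductSpace

lemma aux_numeric (k : ℕ) : (32:ℝ) * 3.15^(k+3) * 3^k ≤ 2^(5*k+8) * ((k:ℝ)+2)^2 := by
  induction k with
  | zero => norm_num
  | succ k ih =>
    have hP : (0:ℝ) < 2^(5*k+8) := by positivity
    have hab : ((k:ℝ)+2)^2 ≤ ((k:ℝ)+1+2)^2 := by nlinarith [k.cast_nonneg (α := ℝ)]
    push_cast
    calc (32:ℝ) * 3.15^(k+1+3) * 3^(k+1) = (3.15*3) * (32 * 3.15^(k+3) * 3^k) := by ring
      _ ≤ (3.15*3) * (2^(5*k+8) * ((k:ℝ)+2)^2) := by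
          apply mul_le_mul_of_nonneg_left ih (by norm_num)
      _ ≤ 32 * (2^(5*k+8) * ((k:ℝ)+1+2)^2) := by
          have : (0:ℝ) ≤ ((k:ℝ)+2)^2 := by positivity
          nlinarith
      _ = 2^(5*(k+1)+8) * ((k:ℝ)+1+2)^2 := by rw [pow_add]; ring

lemma aux_pi (k : ℕ) : (32:ℝ) * Real.pi^(k+3) * 3^k ≤ 2^(5*k+8) * ((k:ℝ)+2)^2 := by
  refine le_trans ?_ (aux_numeric k)
  gcongr
  · exact Real.pi_lt_d2.le

lemma ball_mid_subset {n : ℕ} (w₁ w₂ : EuclideanSpace ℝ (Fin n)) (r : ℝ) :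
    Metric.closedBall ((2:ℝ)⁻¹ • (w₁ + w₂)) r ⊆
      convexHull ℝ (Metric.closedBall w₁ r ∪ Metric.closedBall w₂ r) := by
  intro z hz
  set m := (2:ℝ)⁻¹ • (w₁ + w₂) with hm
  rw [Metric.mem_closedBall, dist_eq_norm] at hz
  have h1 : z - m + w₁ ∈ Metric.closedBall w₁ r := by
    rw [Metric.mem_closedBall, dist_eq_norm]; simpa using hz
  have h2 : z - m + w₂ ∈ Metric.closedBall w₂ r := by
    rw [Metric.mem_closedBall, dist_eq_norm]; simpa using hz
  have hz1 : z - m + w₁ ∈ convexHull ℝ (Metric.closedBall w₁ r ∪ Metric.closedBall w₂ r) :=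
    subset_convexHull ℝ _ (Or.inl h1)
  have hz2 : z - m + w₂ ∈ convexHull ℝ (Metric.closedBall w₁ r ∪ Metric.closedBall w₂ r) :=
    subset_convexHull ℝ _ (Or.inr h2)
  have hcomb := (convex_convexHull ℝ (Metric.closedBall w₁ r ∪ Metric.closedBall w₂ r))
    hz1 hz2 (by norm_num : (0:ℝ) ≤ (2:ℝ)⁻¹) (by norm_num : (0:ℝ) ≤ (2:ℝ)⁻¹) (by norm_num)
  convert hcomb using 1
  rw [hm]
  module

set_option maxHeartbeats 4000000 in
/-- Volume lower bound for the part of the convex hull of two overlapping balls of radius `r`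
that lies beyond the two supporting half-spaces at a common boundary point `p`. -/
theorem conv_two_balls_volume_lower (n : ℕ) (hn : 2 ≤ n) (r : ℝ) (hr : 0 < r)
    (w₁ w₂ p : EuclideanSpace ℝ (Fin n))
    (hd0 : 0 < dist w₁ w₂) (hd2 : dist w₁ w₂ < 2 * r)
    (hp1 : dist p w₁ = r) (hp2 : dist p w₂ = r)
    (α₀ α₁ : ℝ) (hα₀ : 0 < α₀) (hα₁ : α₁ < Real.pi)
    (ha : α₀ ≤ EuclideanGeometry.angle w₁ p w₂)
    (hb : EuclideanGeometry.angle w₁ p w₂ ≤ α₁) :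
    MeasureTheory.volume
      (convexHull ℝ (Metric.closedBall w₁ r ∪ Metric.closedBall w₂ r) ∩
        {x | ⟪p, p - w₁⟫ ≤ ⟪x, p - w₁⟫} ∩ {x | ⟪p, p - w₂⟫ ≤ ⟪x, p - w₂⟫}) ≥
      ENNReal.ofReal
        ((2 : ℝ) ^ (-(4 * (n : ℝ))) * (n : ℝ) ^ (-(n : ℝ)) * r ^ n * α₀ ^ (n + 1) *
          Real.cos (α₁ / 2)) := by
  obtain ⟨k, rfl⟩ : ∃ k, n = k + 2 := ⟨n - 2, by omega⟩
  set α := EuclideanGeometry.angle w₁ p w₂ with hαdef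
  clear_value α
  have hπ := Real.pi_pos
  have hα0 : 0 < α := lt_of_lt_of_le hα₀ ha
  have hαπ : α < Real.pi := lt_of_le_of_lt hb hα₁
  have hα₁0 : 0 < α₁ := lt_of_lt_of_le hα0 hb
  set σ := Real.sin (α / 2) with hσdef
  set C := Real.cos (α / 2) with hCdef
  clear_value σ C
  have hσpos : 0 < σ := by
    rw [hσdef]; exact Real.sin_pos_of_pos_of_lt_pi (by linarith) (by linarith)
  have hCpos : 0 < C := by
    rw [hCdef]; exact Real.cos_pos_of_mem_Ioo ⟨by linarith, by linarith⟩
  have hσ1 : σ ≤ 1 := by rw [hσdef]; exact Real.sin_le_one _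
  have hC1 : C ≤ 1 := by rw [hCdef]; exact Real.cos_le_one _
  have hσC : σ ^ 2 + C ^ 2 = 1 := by
    rw [hσdef, hCdef]; exact Real.sin_sq_add_cos_sq _
  have hcosα : Real.cos α = 1 - 2 * σ ^ 2 := by
    rw [hσdef]
    have h := Real.cos_two_mul (α / 2)
    have e2 : 2 * (α / 2) = α := by ring
    rw [e2] at h
    nlinarith [Real.sin_sq_add_cos_sq (α / 2)]
  -- inner products with the unit vectors
  have hw1 : ‖p - w₁‖ = r := by rw [← dist_eq_norm]; exact hp1
  have hw2 : ‖p - w₂‖ = r := by rw [← dist_eq_norm]; exact hp2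
  have hrne : r ≠ 0 := hr.ne'
  have hinner : ⟪p - w₁, p - w₂⟫ = r ^ 2 * (1 - 2 * σ ^ 2) := by
    have hαeq : EuclideanGeometry.angle w₁ p w₂ =
        InnerProductGeometry.angle (w₁ - p) (w₂ - p) := rfl
    have hn1 : ‖w₁ - p‖ = r := by rw [norm_sub_rev]; exact hw1
    have hn2 : ‖w₂ - p‖ = r := by rw [norm_sub_rev]; exact hw2
    have hcos := InnerProductGeometry.cos_angle_mul_norm_mul_norm (w₁ - p) (w₂ - p)
    rw [← hαeq, ← hαdef, hcosα, hn1, hn2] at hcos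
    have : ⟪w₁ - p, w₂ - p⟫ = r ^ 2 * (1 - 2 * σ ^ 2) := by rw [← hcos]; ring
    calc ⟪p - w₁, p - w₂⟫ = ⟪-(w₁ - p), -(w₂ - p)⟫ := by rw [neg_sub, neg_sub]
      _ = ⟪w₁ - p, w₂ - p⟫ := inner_neg_neg _ _
      _ = r ^ 2 * (1 - 2 * σ ^ 2) := this
  set u₁ : EuclideanSpace ℝ (Fin (k + 2)) := r⁻¹ • (p - w₁) with hu₁def
  set u₂ : EuclideanSpace ℝ (Fin (k + 2)) := r⁻¹ • (p - w₂) with hu₂def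
  clear_value u₁ u₂
  have hnu₁ : ‖u₁‖ = 1 := by
    rw [hu₁def, norm_smul, hw1, norm_inv, Real.norm_eq_abs, abs_of_pos hr, inv_mul_cancel₀ hrne]
  have hnu₂ : ‖u₂‖ = 1 := by
    rw [hu₂def, norm_smul, hw2, norm_inv, Real.norm_eq_abs, abs_of_pos hr, inv_mul_cancel₀ hrne]
  have hu12 : ⟪u₁, u₂⟫ = 1 - 2 * σ ^ 2 := by
    rw [hu₁def, hu₂def, real_inner_smul_left, real_inner_smul_right, hinner]
    field_simp
  set u : EuclideanSpace ℝ (Fin (k + 2)) := (2 * C)⁻¹ • (u₁ + u₂) with hudef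
  set e : EuclideanSpace ℝ (Fin (k + 2)) := (2 * σ)⁻¹ • (u₁ - u₂) with hedef
  clear_value u e
  have hCne : (2 * C) ≠ 0 := by positivity
  have hσne : (2 * σ) ≠ 0 := by positivity
  have hnsum : ‖u₁ + u₂‖ = 2 * C := by
    have h := norm_add_sq_real u₁ u₂
    rw [hnu₁, hnu₂, hu12] at h
    nlinarith only [h, norm_nonneg (u₁ + u₂), hσC, hCpos]
  have hndiff : ‖u₁ - u₂‖ = 2 * σ := by
    have h := norm_sub_sq_real u₁ u₂
    rw [hnu₁, hnu₂, hu12] at h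
    nlinarith only [h, norm_nonneg (u₁ - u₂), hσC, hσpos]
  have hnu : ‖u‖ = 1 := by
    rw [hudef, norm_smul, hnsum, norm_inv, Real.norm_eq_abs, abs_of_pos (by positivity),
      inv_mul_cancel₀ hCne]
  have hne' : ‖e‖ = 1 := by
    rw [hedef, norm_smul, hndiff, norm_inv, Real.norm_eq_abs, abs_of_pos (by positivity),
      inv_mul_cancel₀ hσne]
  have hue : ⟪u, e⟫ = 0 := by
    rw [hudef, hedef, real_inner_smul_left, real_inner_smul_right]
    have : ⟪u₁ + u₂, u₁ - u₂⟫ = 0 := by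
      rw [inner_sub_right, inner_add_left, inner_add_left,
        real_inner_self_eq_norm_sq, real_inner_self_eq_norm_sq, hnu₁, hnu₂,
        real_inner_comm u₂ u₁]
      ring
    rw [this]; ring
  have hu1dec : u₁ = C • u + σ • e := by
    rw [hudef, hedef, smul_smul, smul_smul]
    rw [show C * (2 * C)⁻¹ = (2:ℝ)⁻¹ by field_simp,
        show σ * (2 * σ)⁻¹ = (2:ℝ)⁻¹ by field_simp]
    module
  have hu2dec : u₂ = C • u - σ • e := by
    rw [hudef, hedef, smul_smul, smul_smul]
    rw [show C * (2 * C)⁻¹ = (2:ℝ)⁻¹ by field_simp,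
        show σ * (2 * σ)⁻¹ = (2:ℝ)⁻¹ by field_simp]
    module
  -- orthonormal basis extension
  set i₀ : Fin (k + 2) := ⟨0, by omega⟩ with hi₀def
  set i₁ : Fin (k + 2) := ⟨1, by omega⟩ with hi₁def
  have hi01 : i₀ ≠ i₁ := by simp [hi₀def, hi₁def, Fin.ext_iff]
  classical
  set vfam : Fin (k + 2) → EuclideanSpace ℝ (Fin (k + 2)) := fun i => if i = i₀ then u else e with hvfamdef
  have hv₀ : vfam i₀ = u := by simp [hvfamdef]
  have hv₁ : vfam i₁ = e := by simp [hvfamdef, hi01.symm]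
  have horth : Orthonormal ℝ (Set.restrict {i₀, i₁} vfam) := by
    constructor
    · rintro ⟨i, hi⟩
      rcases hi with rfl | hi
      · change ‖vfam i₀‖ = 1; rw [hv₀]; exact hnu
      · rw [Set.mem_singleton_iff] at hi
        subst hi
        change ‖vfam i₁‖ = 1; rw [hv₁]; exact hne'
    · rintro ⟨i, hi⟩ ⟨j, hj⟩ hij
      have hijne : i ≠ j := by simpa [Subtype.ext_iff] using hij
      rcases hi with rfl | hi
      · rcases hj with rfl | hj
        · exact absurd rfl hijne
        · rw [Set.mem_singleton_iff] at hj; subst hj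
          change ⟪vfam i₀, vfam i₁⟫ = 0; rw [hv₀, hv₁]
          exact hue
      · rw [Set.mem_singleton_iff] at hi; subst hi
        rcases hj with rfl | hj
        · change ⟪vfam i₁, vfam i₀⟫ = 0; rw [hv₀, hv₁]
          rw [real_inner_comm]; exact hue
        · rw [Set.mem_singleton_iff] at hj; subst hj
          exact absurd rfl hijne
  obtain ⟨b, hbext⟩ := horth.exists_orthonormalBasis_extension_of_card_eq
    (by simp [finrank_euclideanSpace_fin])
  have hb0 : b i₀ = u := by rw [hbext i₀ (by simp), hv₀]
  have hb1 : b i₁ = e := by rw [hbext i₁ (by simp), hv₁]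
  -- derive p - wᵢ = r • uᵢ, then forget definitions
  have hpw1 : p - w₁ = r • u₁ := by
    rw [hu₁def, smul_smul, mul_inv_cancel₀ hrne, one_smul]
  have hpw2 : p - w₂ = r • u₂ := by
    rw [hu₂def, smul_smul, mul_inv_cancel₀ hrne, one_smul]
  have hsum2C : u₁ + u₂ = (2 * C) • u := by rw [hu1dec, hu2dec]; module
  clear hαdef hinner hu₁def hu₂def hudef hedef hcosα hu12 hnsum hndiff hv₀ hv₁ hbext
  clear hvfamdef horth vfam hnu₁ hnu₂ hnu hne' hue
  -- the box constants
  set N : ℝ := (k : ℝ) + 2 with hNdef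
  have hN0 : (0:ℝ) < N := by rw [hNdef]; positivity
  set s₁ : ℝ := r * σ ^ 2 / 8 with hs₁def
  set s₂ : ℝ := r * σ ^ 2 / 4 with hs₂def
  set β : ℝ := r * σ * C / 8 with hβdef
  set c : ℝ := r * σ / (3 * N) with hcdef
  clear_value N s₁ s₂ β c
  have hs₁pos : 0 < s₁ := by rw [hs₁def]; positivity
  have hs₁₂ : s₁ ≤ s₂ := by rw [hs₁def, hs₂def]; nlinarith only [hr, hσpos]
  have hβpos : 0 < β := by rw [hβdef]; positivity
  have hcpos : 0 < c := by rw [hcdef]; positivity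
  have hrC : 0 < r * C := by positivity
  -- the box
  set lov : Fin (k+2) → ℝ := fun i => if i = i₀ then s₁ else if i = i₁ then -β else -c
    with hlovdef
  set hiv : Fin (k+2) → ℝ := fun i => if i = i₀ then s₂ else if i = i₁ then β else c
    with hhivdef
  have hlov₀ : lov i₀ = s₁ := by simp [hlovdef]
  have hhiv₀ : hiv i₀ = s₂ := by simp [hhivdef]
  have hlov₁ : lov i₁ = -β := by simp [hlovdef, hi01.symm]
  have hhiv₁ : hiv i₁ = β := by simp [hhivdef, hi01.symm]
  have hlovo : ∀ i, i ≠ i₀ → i ≠ i₁ → lov i = -c := by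
    intro i h0 h1; simp [hlovdef, h0, h1]
  have hhivo : ∀ i, i ≠ i₀ → i ≠ i₁ → hiv i = c := by
    intro i h0 h1; simp [hhivdef, h0, h1]
  set P : Set (Fin (k+2) → ℝ) := Set.Icc lov hiv with hPdef
  set mE := (MeasurableEquiv.toLp 2 (Fin (k+2) → ℝ)).symm with hmEdef
  set T : Set (EuclideanSpace ℝ (Fin (k+2))) :=
    (fun q => q - p) ⁻¹' (⇑(b.repr) ⁻¹' (⇑mE ⁻¹' P)) with hTdef
  have hmemT : ∀ q, q ∈ T → ∀ i, lov i ≤ b.repr (q - p) i ∧ b.repr (q - p) i ≤ hiv i := by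
    intro q hq i
    have h1 : mE (b.repr (q - p)) ∈ P := hq
    rw [hPdef, Set.mem_Icc] at h1
    exact ⟨h1.1 i, h1.2 i⟩
  -- the midpoint
  set m : EuclideanSpace ℝ (Fin (k+2)) := (2:ℝ)⁻¹ • (w₁ + w₂) with hmdef
  have hpm : p - m = (r * C) • u := by
    have h1 : p - m = (r / 2) • (u₁ + u₂) := by
      rw [smul_add,
        show (r/2) • u₁ = (2:ℝ)⁻¹ • (r • u₁) by rw [smul_smul]; congr 1; ring,
        show (r/2) • u₂ = (2:ℝ)⁻¹ • (r • u₂) by rw [smul_smul]; congr 1; ring,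
        ← hpw1, ← hpw2, hmdef]
      module
    rw [h1, hsum2C, smul_smul]
    congr 1
    ring
  -- T is contained in the target region
  have hTsub : T ⊆ (convexHull ℝ (Metric.closedBall w₁ r ∪ Metric.closedBall w₂ r) ∩
        {x | ⟪p, p - w₁⟫ ≤ ⟪x, p - w₁⟫} ∩ {x | ⟪p, p - w₂⟫ ≤ ⟪x, p - w₂⟫}) := by
    intro q hq
    have hx := hmemT q hq
    have hxu : ⟪q - p, u⟫ = b.repr (q - p) i₀ := by
      rw [← hb0, real_inner_comm]
      exact (b.repr_apply_apply (q - p) i₀).symm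
    have hxe : ⟪q - p, e⟫ = b.repr (q - p) i₁ := by
      rw [← hb1, real_inner_comm]
      exact (b.repr_apply_apply (q - p) i₁).symm
    have hq1 : ⟪q - p, u₁⟫ = C * b.repr (q - p) i₀ + σ * b.repr (q - p) i₁ := by
      rw [hu1dec, inner_add_right, real_inner_smul_right, real_inner_smul_right, hxu, hxe]
    have hq2 : ⟪q - p, u₂⟫ = C * b.repr (q - p) i₀ - σ * b.repr (q - p) i₁ := by
      rw [hu2dec, inner_sub_right, real_inner_smul_right, real_inner_smul_right, hxu, hxe]
    have hx0l : s₁ ≤ b.repr (q - p) i₀ := by have := (hx i₀).1; rwa [hlov₀] at this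
    have hx0u : b.repr (q - p) i₀ ≤ s₂ := by have := (hx i₀).2; rwa [hhiv₀] at this
    have hx1l : -β ≤ b.repr (q - p) i₁ := by have := (hx i₁).1; rwa [hlov₁] at this
    have hx1u : b.repr (q - p) i₁ ≤ β := by have := (hx i₁).2; rwa [hhiv₁] at this
    have hzero : C * s₁ - σ * β = 0 := by rw [hs₁def, hβdef]; ring
    have hhalf1 : (0:ℝ) ≤ ⟪q - p, p - w₁⟫ := by
      rw [hpw1, real_inner_smul_right, hq1]
      have h1 : C * s₁ ≤ C * b.repr (q - p) i₀ := mul_le_mul_of_nonneg_left hx0l hCpos.le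
      have h2 : σ * (-β) ≤ σ * b.repr (q - p) i₁ := mul_le_mul_of_nonneg_left hx1l hσpos.le
      nlinarith only [h1, h2, hzero, hr, hrne]
    have hhalf2 : (0:ℝ) ≤ ⟪q - p, p - w₂⟫ := by
      rw [hpw2, real_inner_smul_right, hq2]
      have h1 : C * s₁ ≤ C * b.repr (q - p) i₀ := mul_le_mul_of_nonneg_left hx0l hCpos.le
      have h2 : σ * b.repr (q - p) i₁ ≤ σ * β := mul_le_mul_of_nonneg_left hx1u hσpos.le
      nlinarith only [h1, h2, hzero, hr, hrne]
    -- the convex hull part : q is in the ball of radius r around m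
    have hkc : (k:ℝ) * c ^ 2 ≤ r ^ 2 * σ ^ 2 / 9 := by
      have hkN : (k:ℝ) ≤ N ^ 2 := by rw [hNdef]; nlinarith only [k.cast_nonneg (α := ℝ)]
      rw [hcdef, div_pow, mul_div_assoc', div_le_div_iff₀ (by positivity) (by norm_num)]
      nlinarith only [hkN, sq_nonneg (r * σ), hN0]
    have hrepr : ∀ i, b.repr (q - m) i
        = b.repr (q - p) i + (if i = i₀ then r * C else 0) := by
      intro i
      have hqm : q - m = (q - p) + (p - m) := by abel
      rw [hqm, map_add, hpm, map_smul, ← hb0, b.repr_self]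
      classical
      simp [EuclideanSpace.single_apply, mul_ite]
    have hbound : ∀ i : Fin (k+2), (b.repr (q - m) i)^2 ≤
        (if i = i₀ then (s₂ + r*C)^2 else if i = i₁ then β^2 else c^2) := by
      intro i
      rw [hrepr i]
      by_cases h0 : i = i₀
      · rw [h0, if_pos rfl, if_pos rfl]
        have hprod : 0 ≤ (s₂ - b.repr (q - p) i₀) * (s₂ + b.repr (q - p) i₀ + 2*(r*C)) :=
          mul_nonneg (by linarith) (by linarith)
        nlinarith only [hprod]
      · rw [if_neg h0, if_neg h0, add_zero]
        by_cases h1 : i = i₁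
        · rw [h1, if_pos rfl]
          exact sq_le_sq' hx1l hx1u
        · rw [if_neg h1]
          have hl := (hx i).1
          have hu := (hx i).2
          rw [hlovo i h0 h1] at hl
          rw [hhivo i h0 h1] at hu
          exact sq_le_sq' hl hu
    have hcard : ((Finset.univ.erase i₀).erase i₁).card = k := by
      rw [Finset.card_erase_of_mem, Finset.card_erase_of_mem (Finset.mem_univ i₀)]
      · simp
      · exact Finset.mem_erase.2 ⟨hi01.symm, Finset.mem_univ i₁⟩
    have hsumbound : ∑ i, (if i = i₀ then (s₂ + r*C)^2 else if i = i₁ then β^2 else c^2)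
        = (s₂ + r*C)^2 + β^2 + (k:ℝ) * c^2 := by
      rw [← Finset.add_sum_erase _ _ (Finset.mem_univ i₀), if_pos rfl]
      rw [← Finset.add_sum_erase _ _
        (Finset.mem_erase.2 ⟨hi01.symm, Finset.mem_univ i₁⟩)]
      rw [if_neg hi01.symm, if_pos rfl]
      have hrest : ∑ i ∈ (Finset.univ.erase i₀).erase i₁,
          (if i = i₀ then (s₂ + r*C)^2 else if i = i₁ then β^2 else c^2)
          = ∑ _i ∈ (Finset.univ.erase i₀).erase i₁, c^2 := by
        refine Finset.sum_congr rfl fun i hi2 => ?_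
        have h1 : i ≠ i₁ := (Finset.mem_erase.1 hi2).1
        have h0 : i ≠ i₀ := (Finset.mem_erase.1 (Finset.mem_erase.1 hi2).2).1
        rw [if_neg h0, if_neg h1]
      rw [hrest, Finset.sum_const, hcard, nsmul_eq_mul]
      ring
    have hsum_le : ∑ i, (b.repr (q - m) i)^2 ≤ r^2 := by
      calc ∑ i, (b.repr (q - m) i)^2
          ≤ ∑ i, (if i = i₀ then (s₂ + r*C)^2 else if i = i₁ then β^2 else c^2) :=
            Finset.sum_le_sum fun i _ => hbound i
        _ = (s₂ + r*C)^2 + β^2 + (k:ℝ) * c^2 := hsumbound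
        _ ≤ r^2 := by
            rw [hs₂def, hβdef]
            have h1 : 0 ≤ r^2*σ^2*(1-σ^2) :=
              mul_nonneg (by positivity) (by nlinarith only [hσC, sq_nonneg C])
            have h2 : 0 ≤ r^2*σ^2*(1-C) := mul_nonneg (by positivity) (by linarith)
            have h3 : 0 ≤ r^2*σ^2*(1-C^2) :=
              mul_nonneg (by positivity) (by nlinarith only [hσC, sq_nonneg σ])
            have h4 : r^2*σ^2 + r^2*C^2 = r^2 := by linear_combination r^2 * hσC
            nlinarith only [h1, h2, h3, h4, hkc, sq_nonneg (r*σ)]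
    have hnorm2 : ‖q - m‖^2 = ∑ i, (b.repr (q - m) i)^2 := by
      rw [← LinearIsometryEquiv.norm_map b.repr (q - m), EuclideanSpace.norm_eq,
        Real.sq_sqrt (by positivity)]
      refine Finset.sum_congr rfl fun i _ => ?_
      rw [Real.norm_eq_abs, sq_abs]
    have hball : q ∈ Metric.closedBall m r := by
      rw [Metric.mem_closedBall, dist_eq_norm]
      nlinarith only [hnorm2, hsum_le, norm_nonneg (q - m), hr]
    refine ⟨⟨?_, ?_⟩, ?_⟩
    · rw [hmdef] at hball
      exact ball_mid_subset w₁ w₂ r hball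
    · rw [Set.mem_setOf_eq]
      have h := hhalf1
      rw [inner_sub_left] at h
      linarith
    · rw [Set.mem_setOf_eq]
      have h := hhalf2
      rw [inner_sub_left] at h
      linarith
  -- volume of T
  have hcard : ((Finset.univ.erase i₀).erase i₁).card = k := by
    rw [Finset.card_erase_of_mem, Finset.card_erase_of_mem (Finset.mem_univ i₀)]
    · simp
    · exact Finset.mem_erase.2 ⟨hi01.symm, Finset.mem_univ i₁⟩
  have hPmeas : MeasurableSet P := by rw [hPdef]; exact measurableSet_Icc
  have hvolT : MeasureTheory.volume T = ∏ i, ENNReal.ofReal (hiv i - lov i) := by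
    have h1 : T = (fun q => -p + q) ⁻¹' (⇑(b.repr) ⁻¹' (⇑mE ⁻¹' P)) := by
      have hfun : (fun q : EuclideanSpace ℝ (Fin (k+2)) => q - p) = (fun q => -p + q) :=
        funext fun q' => sub_eq_neg_add q' p
      rw [hTdef, hfun]
    rw [h1, MeasureTheory.measure_preimage_add,
      b.measurePreserving_repr.measure_preimage
        ((hPmeas.preimage mE.measurable).nullMeasurableSet),
      (EuclideanSpace.volume_preserving_symm_measurableEquiv_toLp
        (Fin (k+2))).measure_preimage hPmeas.nullMeasurableSet,
      hPdef, Real.volume_Icc_pi]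
  have hβ2 : β - -β = 2*β := by ring
  have hprodT : ∏ i, ENNReal.ofReal (hiv i - lov i)
      = ENNReal.ofReal (s₂ - s₁) * (ENNReal.ofReal (2*β) * ENNReal.ofReal (2*c) ^ k) := by
    rw [← Finset.mul_prod_erase _ _ (Finset.mem_univ i₀),
      ← Finset.mul_prod_erase _ _ (Finset.mem_erase.2 ⟨hi01.symm, Finset.mem_univ i₁⟩),
      hlov₀, hhiv₀, hlov₁, hhiv₁]
    have hrest : ∏ i ∈ (Finset.univ.erase i₀).erase i₁, ENNReal.ofReal (hiv i - lov i)
        = ENNReal.ofReal (2*c) ^ k := by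
      have hco : ∀ i ∈ (Finset.univ.erase i₀).erase i₁,
          ENNReal.ofReal (hiv i - lov i) = ENNReal.ofReal (2*c) := by
        intro i hi2
        have h1 : i ≠ i₁ := (Finset.mem_erase.1 hi2).1
        have h0 : i ≠ i₀ := (Finset.mem_erase.1 (Finset.mem_erase.1 hi2).2).1
        rw [hlovo i h0 h1, hhivo i h0 h1]
        congr 1
        ring
      rw [Finset.prod_congr rfl hco, Finset.prod_const, hcard]
    rw [hrest, hβ2]
  have h2cpos : (0:ℝ) ≤ 2*c := by positivity
  have hmerge : ENNReal.ofReal (s₂ - s₁) * (ENNReal.ofReal (2*β) * ENNReal.ofReal (2*c) ^ k)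
      = ENNReal.ofReal ((s₂ - s₁) * ((2*β) * (2*c)^k)) := by
    rw [← ENNReal.ofReal_pow h2cpos, ← ENNReal.ofReal_mul (by positivity),
      ← ENNReal.ofReal_mul (by linarith)]
  -- the scalar inequality
  have hC₁pos : 0 < Real.cos (α₁/2) :=
    Real.cos_pos_of_mem_Ioo ⟨by linarith, by linarith⟩
  have hCC₁ : Real.cos (α₁/2) ≤ C := by
    rw [hCdef]
    exact Real.cos_le_cos_of_nonneg_of_le_pi (by linarith) (by linarith) (by linarith)
  have hα₀π : α₀ ≤ Real.pi := by linarith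
  have hσα : α₀ / Real.pi ≤ σ := by
    rw [hσdef]
    have h1 : Real.sin (α₀/2) ≤ Real.sin (α/2) :=
      Real.sin_le_sin_of_le_of_le_pi_div_two (by linarith) (by linarith) (by linarith)
    have h2 := Real.mul_le_sin (x := α₀/2) (by linarith) (by linarith)
    have h3 : 2/Real.pi * (α₀/2) = α₀/Real.pi := by field_simp
    linarith
  have hα₀π0 : 0 ≤ α₀ / Real.pi := by positivity
  have hNcast : ((k+2:ℕ):ℝ) = N := by rw [hNdef]; push_cast; ring
  have hr2 : (2:ℝ) ^ (-(4 * ((k+2:ℕ):ℝ))) = ((2:ℝ)^(4*k+8))⁻¹ := by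
    rw [show -(4*((k+2:ℕ):ℝ)) = -((4*k+8 : ℕ):ℝ) by push_cast; ring,
      Real.rpow_neg (by norm_num), Real.rpow_natCast]
  have hrn : ((k+2:ℕ):ℝ) ^ (-((k+2:ℕ):ℝ)) = (N^(k+2))⁻¹ := by
    rw [Real.rpow_neg (by positivity), Real.rpow_natCast, hNcast]
  have hG1 : (s₂ - s₁) * ((2*β) * (2*c)^k)
      = r^(k+2) * σ^(k+3) * C * (2^k / (32 * 3^k * N^k)) := by
    rw [hs₁def, hs₂def, hβdef, hcdef,
      show 2 * (r * σ / (3 * N)) = (2*r*σ) / (3*N) by ring,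
      div_pow, mul_pow, mul_pow, mul_pow]
    have h3N : ((3:ℝ)*N)^k = 3^k * N^k := mul_pow 3 N k
    field_simp
    ring
  have hG2 : r^(k+2) * (α₀/Real.pi)^(k+3) * Real.cos (α₁/2) * (2^k / (32 * 3^k * N^k))
      ≤ r^(k+2) * σ^(k+3) * C * (2^k / (32 * 3^k * N^k)) := by
    have hs : (α₀/Real.pi)^(k+3) ≤ σ^(k+3) := pow_le_pow_left₀ hα₀π0 hσα _
    have hd : (0:ℝ) ≤ 2^k / (32 * 3^k * N^k) := by positivity
    have hrp : (0:ℝ) ≤ r^(k+2) := by positivity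
    have h1 : r^(k+2) * (α₀/Real.pi)^(k+3) * Real.cos (α₁/2)
        ≤ r^(k+2) * σ^(k+3) * C := by
      apply mul_le_mul
      · exact mul_le_mul_of_nonneg_left hs hrp
      · exact hCC₁
      · exact hC₁pos.le
      · positivity
    exact mul_le_mul_of_nonneg_right h1 hd
  have hkey : (32:ℝ) * Real.pi^(k+3) * 3^k * N^k ≤ 2^k * (2^(4*k+8) * N^(k+2)) := by
    have h2 : (32:ℝ) * Real.pi^(k+3) * 3^k * N^k ≤ (2^(5*k+8) * N^2) * N^k := by
      apply mul_le_mul_of_nonneg_right _ (by positivity)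
      rw [hNdef]
      exact aux_pi k
    calc (32:ℝ) * Real.pi^(k+3) * 3^k * N^k ≤ (2^(5*k+8) * N^2) * N^k := h2
      _ = 2^k * (2^(4*k+8) * N^(k+2)) := by
          rw [show 5*k+8 = (4*k+8)+k by omega, pow_add, show k+2 = k+2 from rfl, pow_add]
          ring
  have hmain : ((2:ℝ)^(4*k+8))⁻¹ * (N^(k+2))⁻¹ * r^(k+2) * α₀^(k+3) * Real.cos (α₁/2)
      ≤ r^(k+2) * (α₀/Real.pi)^(k+3) * Real.cos (α₁/2) * (2^k / (32 * 3^k * N^k)) := by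
    have hA : (0:ℝ) ≤ r^(k+2) * α₀^(k+3) * Real.cos (α₁/2) := by positivity
    rw [div_pow]
    rw [show ((2:ℝ)^(4*k+8))⁻¹ * (N^(k+2))⁻¹ * r^(k+2) * α₀^(k+3) * Real.cos (α₁/2)
        = (r^(k+2) * α₀^(k+3) * Real.cos (α₁/2)) / (2^(4*k+8) * N^(k+2)) by ring]
    rw [show r^(k+2) * (α₀^(k+3)/Real.pi^(k+3)) * Real.cos (α₁/2) * (2^k / (32*3^k*N^k))
        = (r^(k+2) * α₀^(k+3) * Real.cos (α₁/2)) * 2^k / (Real.pi^(k+3) * (32*3^k*N^k))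
        by ring]
    rw [div_le_div_iff₀ (by positivity) (by positivity)]
    have h := mul_le_mul_of_nonneg_left hkey hA
    nlinarith only [h]
  -- final assembly
  have hreal : (2:ℝ) ^ (-(4 * ((k+2:ℕ):ℝ))) * ((k+2:ℕ):ℝ) ^ (-((k+2:ℕ):ℝ)) * r^(k+2)
      * α₀^(k+2+1) * Real.cos (α₁/2) ≤ (s₂ - s₁) * ((2*β) * (2*c)^k) := by
    rw [hr2, hrn, show k+2+1 = k+3 by omega, hG1]
    exact le_trans hmain hG2
  calc ENNReal.ofReal ((2:ℝ) ^ (-(4 * ((k+2:ℕ):ℝ))) * ((k+2:ℕ):ℝ) ^ (-((k+2:ℕ):ℝ))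
        * r^(k+2) * α₀^(k+2+1) * Real.cos (α₁/2))
      ≤ ENNReal.ofReal ((s₂ - s₁) * ((2*β) * (2*c)^k)) := ENNReal.ofReal_le_ofReal hreal
    _ = MeasureTheory.volume T := by rw [hvolT, hprodT, hmerge]
    _ ≤ MeasureTheory.volume ((convexHull ℝ (Metric.closedBall w₁ r ∪ Metric.closedBall w₂ r) ∩
        {x | ⟪p, p - w₁⟫ ≤ ⟪x, p - w₁⟫} ∩ {x | ⟪p, p - w₂⟫ ≤ ⟪x, p - w₂⟫})) :=
      MeasureTheory.measure_mono hTsub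
end

section
/- Let X ⊂ ℝⁿ be compact, let H be a hyperplane with closed half-spaces H⁺ and H⁻, and let σ_H denote reflection through H. Define the two-point symmetrization τ_{H⁺}X by (τ_{H⁺}X) ∩ H⁺ = (X ∪ σ_H X) ∩ H⁺ and (τ_{H⁺}X) ∩ H⁻ = (X ∩ σ_H X) ∩ H⁻. Then τ_{H⁺}X is compact, has the same Lebesgue measure as X, and diam(τ_{H⁺}X) ≤ diam(X). -/
open scoped RealInnerProductSpace

/-- Two-point symmetrization in `ℝⁿ`: with `H = {x | ⟪u,x⟫ = c}` (unit normal `u`),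
half-spaces `H⁺ = {x | ⟪u,x⟫ ≥ c}`, `H⁻ = {x | ⟪u,x⟫ ≤ c}` and reflection
`σ x = x - 2(⟪u,x⟫ - c) • u`, the two-point symmetrization
`T = ((X ∪ σ''X) ∩ H⁺) ∪ ((X ∩ σ''X) ∩ H⁻)` of a compact set `X` is compact, has the same
Lebesgue measure as `X`, and its diameter does not exceed that of `X`. -/
theorem two_point_symmetrization_properties (n : ℕ)
    (X : Set (EuclideanSpace ℝ (Fin n))) (hX : IsCompact X)
    (u : EuclideanSpace ℝ (Fin n)) (hu : ‖u‖ = 1) (c : ℝ)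
    (σ : EuclideanSpace ℝ (Fin n) → EuclideanSpace ℝ (Fin n))
    (hσ : ∀ x, σ x = x - (2 * (⟪u, x⟫ - c)) • u)
    (T : Set (EuclideanSpace ℝ (Fin n)))
    (hT : T = ((X ∪ σ '' X) ∩ {x | c ≤ ⟪u, x⟫}) ∪ ((X ∩ σ '' X) ∩ {x | ⟪u, x⟫ ≤ c})) :
    IsCompact T ∧ MeasureTheory.volume T = MeasureTheory.volume X ∧
      Metric.diam T ≤ Metric.diam X := by
  open MeasureTheory Set in
  -- basic facts about `σ`
  have huu : ⟪u, u⟫ = (1:ℝ) := by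
    rw [real_inner_self_eq_norm_sq, hu]; norm_num
  have hinner : ∀ x, ⟪u, σ x⟫ = 2*c - ⟪u, x⟫ := by
    intro x; rw [hσ]
    simp only [inner_sub_right, real_inner_smul_right, huu]
    ring
  have hinv : ∀ x, σ (σ x) = x := by
    intro x
    rw [hσ (σ x), hinner x, hσ x]
    module
  have hform : σ = fun x => (2*c) • u + (Submodule.reflection (ℝ ∙ u)ᗮ x) := by
    funext x
    rw [hσ, Submodule.reflection_orthogonal_apply, Submodule.reflection_singleton_apply, hu]
    push_cast
    module
  have hiso : Isometry σ := by
    rw [hform]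
    exact (isometry_add_left ((2*c) • u)).comp (Submodule.reflection (ℝ ∙ u)ᗮ).isometry
  have hmp : MeasurePreserving σ
      (volume : Measure (EuclideanSpace ℝ (Fin n))) volume := by
    rw [hform]
    exact (measurePreserving_add_left volume ((2*c) • u)).comp
      (Submodule.reflection (ℝ ∙ u)ᗮ).measurePreserving
  -- set-theoretic facts
  set S : Set (EuclideanSpace ℝ (Fin n)) := σ '' X with hSdef
  set P : Set (EuclideanSpace ℝ (Fin n)) := {x | c ≤ ⟪u, x⟫} with hPdef
  set M : Set (EuclideanSpace ℝ (Fin n)) := {x | ⟪u, x⟫ ≤ c} with hMdef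
  have hmemS : ∀ {z}, z ∈ S → σ z ∈ X := by
    rintro z ⟨w, hw, rfl⟩; rwa [hinv]
  have himg : ∀ A : Set (EuclideanSpace ℝ (Fin n)), σ '' A = σ ⁻¹' A := by
    intro A; ext x
    constructor
    · rintro ⟨y, hy, rfl⟩; show σ (σ y) ∈ A; rwa [hinv]
    · intro hx; exact ⟨σ x, hx, hinv x⟩
  have hcont : Continuous fun x : EuclideanSpace ℝ (Fin n) => ⟪u, x⟫ :=
    Continuous.inner continuous_const continuous_id
  have hPc : IsClosed P := isClosed_le continuous_const hcont
  have hMc : IsClosed M := isClosed_le hcont continuous_const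
  have hS : IsCompact S := hX.image hiso.continuous
  have hXm : MeasurableSet X := hX.isClosed.measurableSet
  have hSm : MeasurableSet S := hS.isClosed.measurableSet
  have hPm : MeasurableSet P := hPc.measurableSet
  have hMm : MeasurableSet M := hMc.measurableSet
  have hpreP : σ ⁻¹' P = M := by
    ext x; simp only [hPdef, hMdef, mem_preimage, mem_setOf_eq, hinner]
    constructor <;> intro h <;> linarith
  have hpreM : σ ⁻¹' M = P := by
    ext x; simp only [hPdef, hMdef, mem_preimage, mem_setOf_eq, hinner]
    constructor <;> intro h <;> linarith
  have hpreX : σ ⁻¹' X = S := (himg X).symm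
  have hpreS : σ ⁻¹' S = X := by
    rw [hSdef, himg, ← preimage_comp]
    have : σ ∘ σ = id := funext hinv
    rw [this, preimage_id]
  -- the hyperplane has measure zero
  have hHzero : volume {x : EuclideanSpace ℝ (Fin n) | ⟪u, x⟫ = c} = 0 := by
    have heq : {x : EuclideanSpace ℝ (Fin n) | ⟪u, x⟫ = c} =
        (AffineSubspace.mk' (c • u) (LinearMap.ker (innerSL ℝ u : EuclideanSpace ℝ (Fin n) →ₗ[ℝ] ℝ)) :
          Set (EuclideanSpace ℝ (Fin n))) := by
      ext x
      simp only [mem_setOf_eq, SetLike.mem_coe, AffineSubspace.mem_mk',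
        vsub_eq_sub, LinearMap.mem_ker, ContinuousLinearMap.coe_coe, innerSL_apply_apply,
        inner_sub_right, real_inner_smul_right, huu, mul_one, sub_eq_zero]
      try exact ⟨fun h => h.symm, fun h => h.symm⟩
      try exact eq_comm
    rw [heq]
    refine MeasureTheory.Measure.addHaar_affineSubspace _ _ fun h => ?_
    have hmem : ((c+1) • u : EuclideanSpace ℝ (Fin n)) ∈
        AffineSubspace.mk' (c • u) (LinearMap.ker (innerSL ℝ u : EuclideanSpace ℝ (Fin n) →ₗ[ℝ] ℝ)) := h ▸ trivial
    rw [AffineSubspace.mem_mk'] at hmem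
    simp only [vsub_eq_sub, LinearMap.mem_ker, ContinuousLinearMap.coe_coe, innerSL_apply_apply,
      inner_sub_right, real_inner_smul_right, huu] at hmem
    linarith
  have hPMzero : volume (P ∩ M) = 0 := by
    refine measure_mono_null (fun x hx => ?_) hHzero
    exact le_antisymm hx.2 hx.1
  -- compactness
  have hTc : IsCompact T := by
    rw [hT]
    exact ((hX.union hS).inter_right hPc).union ((hX.inter hS).inter_right hMc)
  refine ⟨hTc, ?_, ?_⟩
  · -- volume
    have hpre : ∀ A : Set (EuclideanSpace ℝ (Fin n)), MeasurableSet A →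
        volume (σ ⁻¹' A) = volume A := fun A hA =>
      hmp.measure_preimage hA.nullMeasurableSet
    have e1 : volume T = volume ((X ∪ S) ∩ P) + volume ((X ∩ S) ∩ M) := by
      have h2 := MeasureTheory.measure_union_add_inter (μ := volume)
        ((X ∪ S) ∩ P) ((hXm.inter hSm).inter hMm)
      have hz : volume (((X ∪ S) ∩ P) ∩ ((X ∩ S) ∩ M)) = 0 := by
        refine measure_mono_null ?_ hPMzero
        rintro x ⟨⟨_, h1⟩, _, h2⟩
        exact ⟨h1, h2⟩
      rw [hz, add_zero] at h2
      rw [hT, ← h2]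
    have e2 : volume ((X ∩ S) ∩ M) = volume ((X ∩ S) ∩ P) := by
      have : σ ⁻¹' ((X ∩ S) ∩ P) = (X ∩ S) ∩ M := by
        rw [preimage_inter, preimage_inter, hpreX, hpreS, hpreP, inter_comm S X]
      rw [← this, hpre _ ((hXm.inter hSm).inter hPm)]
    have e3 : volume ((X ∪ S) ∩ P) + volume ((X ∩ S) ∩ P)
        = volume (X ∩ P) + volume (S ∩ P) := by
      have h3 := MeasureTheory.measure_union_add_inter (μ := volume)
        (X ∩ P) (hSm.inter hPm)
      have hu1 : (X ∩ P) ∪ (S ∩ P) = (X ∪ S) ∩ P := (Set.union_inter_distrib_right X S P).symm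
      have hu2 : (X ∩ P) ∩ (S ∩ P) = (X ∩ S) ∩ P := by
        ext x; constructor
        · rintro ⟨⟨h1, h2⟩, ⟨h3, _⟩⟩; exact ⟨⟨h1, h3⟩, h2⟩
        · rintro ⟨⟨h1, h3⟩, h2⟩; exact ⟨⟨h1, h2⟩, ⟨h3, h2⟩⟩
      rw [hu1, hu2] at h3
      exact h3
    have e4 : volume (S ∩ P) = volume (X ∩ M) := by
      have : σ ⁻¹' (X ∩ M) = S ∩ P := by rw [preimage_inter, hpreX, hpreM]
      rw [← this, hpre _ (hXm.inter hMm)]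
    have e5 : volume (X ∩ P) + volume (X ∩ M) = volume X := by
      have h5 := MeasureTheory.measure_union_add_inter (μ := volume)
        (X ∩ P) (hXm.inter hMm)
      have hu1 : (X ∩ P) ∪ (X ∩ M) = X := by
        rw [← Set.inter_union_distrib_left]
        refine Set.inter_eq_self_of_subset_left fun x _ => ?_
        rcases le_total c (⟪u, x⟫) with h | h
        · exact Or.inl h
        · exact Or.inr h
      have hz : volume ((X ∩ P) ∩ (X ∩ M)) = 0 := by
        refine measure_mono_null ?_ hPMzero
        rintro x ⟨⟨_, h1⟩, _, h2⟩
        exact ⟨h1, h2⟩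
      rw [hu1, hz, add_zero] at h5
      exact h5.symm
    rw [e1, e2, e3, e4, e5]
  · -- diameter
    have key : ∀ x y, 0 ≤ (⟪u, x⟫ - c) * (⟪u, y⟫ - c) → dist x y ≤ dist x (σ y) := by
      intro x y h
      have hxy : x - σ y = (x - y) + (2*(⟪u, y⟫ - c)) • u := by
        rw [hσ]; module
      have expand : ‖x - σ y‖^2 = ‖x - y‖^2 + 4 * ((⟪u, x⟫ - c) * (⟪u, y⟫ - c)) := by
        rw [hxy, @norm_add_sq_real]
        have h1 : ⟪x - y, (2*(⟪u, y⟫ - c)) • u⟫ = (2*(⟪u, y⟫ - c)) * (⟪u, x⟫ - ⟪u, y⟫) := by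
          rw [real_inner_smul_right, inner_sub_left, real_inner_comm x u, real_inner_comm y u]
        have h2 : ‖(2*(⟪u, y⟫ - c)) • u‖^2 = (2*(⟪u, y⟫ - c))^2 := by
          rw [norm_smul, hu, mul_one, Real.norm_eq_abs, sq_abs]
        rw [h1, h2]; ring
      have hsq : ‖x - y‖^2 ≤ ‖x - σ y‖^2 := by rw [expand]; nlinarith
      rw [dist_eq_norm, dist_eq_norm]
      have := Real.sqrt_le_sqrt hsq
      rwa [Real.sqrt_sq (norm_nonneg _), Real.sqrt_sq (norm_nonneg _)] at this
    have hisoD : ∀ x y, dist (σ x) (σ y) = dist x y := fun x y => hiso.dist_eq x y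
    have hd : ∀ a ∈ X, ∀ b ∈ X, dist a b ≤ Metric.diam X := fun a ha b hb =>
      Metric.dist_le_diam_of_mem hX.isBounded ha hb
    refine Metric.diam_le_of_forall_dist_le Metric.diam_nonneg ?_
    intro x hx y hy
    rw [hT] at hx hy
    rcases hx with ⟨hx1, hx2⟩ | ⟨⟨hxX, hxS⟩, hx2⟩
    · rcases hy with ⟨hy1, hy2⟩ | ⟨⟨hyX, hyS⟩, hy2⟩
      · -- both in the upper part
        have hx2' : c ≤ ⟪u, x⟫ := hx2
        have hy2' : c ≤ ⟪u, y⟫ := hy2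
        have hprod : 0 ≤ (⟪u, x⟫ - c) * (⟪u, y⟫ - c) :=
          mul_nonneg (by linarith) (by linarith)
        rcases hx1 with hxX | hxS
        · rcases hy1 with hyX | hyS
          · exact hd _ hxX _ hyX
          · exact le_trans (key x y hprod) (hd _ hxX _ (hmemS hyS))
        · rcases hy1 with hyX | hyS
          · calc dist x y = dist y x := dist_comm _ _
              _ ≤ dist y (σ x) := key y x (by nlinarith)
              _ ≤ Metric.diam X := hd _ hyX _ (hmemS hxS)
          · rw [← hisoD]; exact hd _ (hmemS hxS) _ (hmemS hyS)
      · rcases hx1 with hxX | hxS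
        · exact hd _ hxX _ hyX
        · rw [← hisoD]; exact hd _ (hmemS hxS) _ (hmemS hyS)
    · rcases hy with ⟨hy1, hy2⟩ | ⟨⟨hyX, hyS⟩, hy2⟩
      · rcases hy1 with hyX | hyS
        · exact hd _ hxX _ hyX
        · rw [← hisoD]; exact hd _ (hmemS hxS) _ (hmemS hyS)
      · exact hd _ hxX _ hyX
end

section
/- Let X ⊂ ℝⁿ be compact, ρ > 0, and let H be a hyperplane with half-space H⁺. Then the ρ-parallel body of the two-point symmetrization satisfies (τ_{H⁺}X)^{(ρ)} ⊆ τ_{H⁺}(X^{(ρ)}); consequently, V((τ_{H⁺}X)^{(ρ)}) ≤ V(X^{(ρ)}). -/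
open scoped RealInnerProductSpace

/-- Reflection through the hyperplane `{x | ⟪u,x⟫ = c}` (for a unit vector `u`). -/
noncomputable def reflHyp (n : ℕ) (u : EuclideanSpace ℝ (Fin n)) (c : ℝ)
    (x : EuclideanSpace ℝ (Fin n)) : EuclideanSpace ℝ (Fin n) :=
  x - (2 * (⟪u, x⟫ - c)) • u

/-- Two-point symmetrization with respect to the half-space `{x | ⟪u,x⟫ ≥ c}`. -/
noncomputable def twoPointSymm (n : ℕ) (u : EuclideanSpace ℝ (Fin n)) (c : ℝ)
    (X : Set (EuclideanSpace ℝ (Fin n))) : Set (EuclideanSpace ℝ (Fin n)) :=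
  ((X ∪ reflHyp n u c '' X) ∩ {x | c ≤ ⟪u, x⟫}) ∪
    ((X ∩ reflHyp n u c '' X) ∩ {x | ⟪u, x⟫ ≤ c})

/-- The closed `ρ`-parallel body of a set. -/
def parallelBody (n : ℕ) (X : Set (EuclideanSpace ℝ (Fin n))) (ρ : ℝ) :
    Set (EuclideanSpace ℝ (Fin n)) :=
  {z | ∃ x ∈ X, dist x z ≤ ρ}

open Set MeasureTheory
open scoped Pointwise

lemma inner_reflHyp (n : ℕ) (u : EuclideanSpace ℝ (Fin n)) (c : ℝ) (hu : ‖u‖ = 1)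
    (x : EuclideanSpace ℝ (Fin n)) : ⟪u, reflHyp n u c x⟫ = 2 * c - ⟪u, x⟫ := by
  have h1 : ⟪u, u⟫ = 1 := by rw [real_inner_self_eq_norm_sq, hu]; norm_num
  simp only [reflHyp, inner_sub_right, real_inner_smul_right, h1, mul_one]
  ring

lemma reflHyp_invol (n : ℕ) (u : EuclideanSpace ℝ (Fin n)) (c : ℝ) (hu : ‖u‖ = 1) :
    Function.Involutive (reflHyp n u c) := by
  intro x
  show reflHyp n u c x - (2 * (⟪u, reflHyp n u c x⟫ - c)) • u = x
  rw [inner_reflHyp n u c hu x]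
  show x - (2 * (⟪u, x⟫ - c)) • u - (2 * (2 * c - ⟪u, x⟫ - c)) • u = x
  rw [sub_sub, ← add_smul]
  have : 2 * (⟪u, x⟫ - c) + 2 * (2 * c - ⟪u, x⟫ - c) = 0 := by ring
  rw [this, zero_smul, sub_zero]

lemma dist_reflHyp_sq (n : ℕ) (u : EuclideanSpace ℝ (Fin n)) (c : ℝ) (hu : ‖u‖ = 1)
    (x z : EuclideanSpace ℝ (Fin n)) :
    dist x (reflHyp n u c z) ^ 2 = dist x z ^ 2 + 4 * ((⟪u, x⟫ - c) * (⟪u, z⟫ - c)) := by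
  have e : x - reflHyp n u c z = (x - z) + (2 * (⟪u, z⟫ - c)) • u := by
    show x - (z - _) = _; abel
  rw [dist_eq_norm, dist_eq_norm, e, norm_add_sq_real]
  have h2 : ⟪x - z, (2 * (⟪u, z⟫ - c)) • u⟫ = (2 * (⟪u, z⟫ - c)) * (⟪u, x⟫ - ⟪u, z⟫) := by
    rw [real_inner_smul_right, inner_sub_left, real_inner_comm x u, real_inner_comm z u]
  have h3 : ‖(2 * (⟪u, z⟫ - c)) • u‖ ^ 2 = (2 * (⟪u, z⟫ - c)) ^ 2 := by
    rw [norm_smul, hu, mul_one, Real.norm_eq_abs, sq_abs]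
  rw [h2, h3]; ring

noncomputable def reflLM (n : ℕ) (u : EuclideanSpace ℝ (Fin n)) :
    EuclideanSpace ℝ (Fin n) →ₗ[ℝ] EuclideanSpace ℝ (Fin n) where
  toFun x := x - (2 * ⟪u, x⟫) • u
  map_add' x y := by
    simp only [inner_add_right]
    rw [mul_add, add_smul]
    abel
  map_smul' r x := by
    simp only [inner_smul_right, RingHom.id_apply, smul_sub, smul_smul]
    rw [show r * (2 * ⟪u, x⟫) = 2 * (r * ⟪u, x⟫) by ring]

lemma reflLM_invol (n : ℕ) (u : EuclideanSpace ℝ (Fin n)) (hu : ‖u‖ = 1) :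
    Function.Involutive (reflLM n u) := by
  intro x
  have h1 : ⟪u, u⟫ = 1 := by rw [real_inner_self_eq_norm_sq, hu]; norm_num
  show reflLM n u x - (2 * ⟪u, reflLM n u x⟫) • u = x
  have h2 : ⟪u, reflLM n u x⟫ = -⟪u, x⟫ := by
    show ⟪u, x - (2 * ⟪u, x⟫) • u⟫ = _
    rw [inner_sub_right, real_inner_smul_right, h1]
    ring
  rw [h2]
  show x - (2 * ⟪u, x⟫) • u - (2 * -⟪u, x⟫) • u = x
  rw [sub_sub, ← add_smul]
  rw [show 2 * ⟪u, x⟫ + 2 * -⟪u, x⟫ = 0 by ring, zero_smul, sub_zero]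

lemma sq_le_sq_nonneg' {a b : ℝ} (ha : 0 ≤ a) (hb : 0 ≤ b) (h : a ^ 2 ≤ b ^ 2) : a ≤ b := by
  nlinarith

noncomputable def reflLIE (n : ℕ) (u : EuclideanSpace ℝ (Fin n)) (hu : ‖u‖ = 1) :
    EuclideanSpace ℝ (Fin n) ≃ₗᵢ[ℝ] EuclideanSpace ℝ (Fin n) where
  toLinearEquiv := LinearEquiv.ofInvolutive (reflLM n u) (reflLM_invol n u hu)
  norm_map' := by
    intro x
    have h1 : ⟪u, u⟫ = 1 := by rw [real_inner_self_eq_norm_sq, hu]; norm_num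
    have h2 : ‖(reflLM n u) x‖ ^ 2 = ‖x‖ ^ 2 := by
      show ‖x - (2 * ⟪u, x⟫) • u‖ ^ 2 = _
      rw [norm_sub_sq_real, real_inner_smul_right, norm_smul, Real.norm_eq_abs, hu, mul_one,
        sq_abs, real_inner_comm x u]
      ring
    exact sq_le_sq_nonneg' (norm_nonneg _) (norm_nonneg _) h2.le |>.antisymm
      (sq_le_sq_nonneg' (norm_nonneg _) (norm_nonneg _) h2.ge)

lemma reflHyp_measurePreserving (n : ℕ) (u : EuclideanSpace ℝ (Fin n)) (c : ℝ) (hu : ‖u‖ = 1) :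
    MeasureTheory.MeasurePreserving (reflHyp n u c) MeasureTheory.volume MeasureTheory.volume := by
  have hcomp : reflHyp n u c = (fun x => x + (2 * c) • u) ∘ (reflLIE n u hu) := by
    funext x
    show x - (2 * (⟪u, x⟫ - c)) • u = (x - (2 * ⟪u, x⟫) • u) + (2 * c) • u
    rw [show (2 * (⟪u, x⟫ - c)) = 2 * ⟪u, x⟫ - 2 * c by ring, sub_smul]
    abel
  rw [hcomp]
  exact (MeasureTheory.measurePreserving_add_right MeasureTheory.volume ((2 * c) • u)).comp
    ((reflLIE n u hu).measurePreserving)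

lemma hyperplane_volume_zero (n : ℕ) (u : EuclideanSpace ℝ (Fin n)) (c : ℝ) (hu : ‖u‖ = 1) :
    MeasureTheory.volume {x : EuclideanSpace ℝ (Fin n) | ⟪u, x⟫ = c} = 0 := by
  have h1 : ⟪u, u⟫ = 1 := by rw [real_inner_self_eq_norm_sq, hu]; norm_num
  set K : Submodule ℝ (EuclideanSpace ℝ (Fin n)) :=
    { carrier := {x | ⟪u, x⟫ = 0}
      add_mem' := by intro a b ha hb; simp only [Set.mem_setOf_eq, inner_add_right] at *
                     rw [ha, hb]; ring
      zero_mem' := by simp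
      smul_mem' := by intro r a ha; simp only [Set.mem_setOf_eq, inner_smul_right] at *
                      rw [ha]; ring } with hK
  have hKtop : K ≠ ⊤ := by
    intro h
    have : u ∈ K := h ▸ Submodule.mem_top
    have : ⟪u, u⟫ = 0 := this
    rw [h1] at this; norm_num at this
  have hset : {x : EuclideanSpace ℝ (Fin n) | ⟪u, x⟫ = c} =
      (fun x => x + (-(c • u))) ⁻¹' (K : Set (EuclideanSpace ℝ (Fin n))) := by
    ext x
    simp only [Set.mem_setOf_eq, Set.mem_preimage, SetLike.mem_coe]
    constructor
    · intro h
      show ⟪u, x + -(c • u)⟫ = 0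
      rw [inner_add_right, inner_neg_right, real_inner_smul_right, h1, h]; ring
    · intro h
      have : ⟪u, x + -(c • u)⟫ = 0 := h
      rw [inner_add_right, inner_neg_right, real_inner_smul_right, h1] at this
      linarith
  rw [hset, MeasureTheory.measure_preimage_add_right]
  exact MeasureTheory.Measure.addHaar_submodule _ K hKtop

/-- The parallel body of the two-point symmetrization is contained in the two-point
symmetrization of the parallel body; consequently its volume is at most that of the
parallel body of the original set. -/
theorem two_point_symmetrization_parallel (n : ℕ)
    (X : Set (EuclideanSpace ℝ (Fin n))) (hX : IsCompact X)
    (u : EuclideanSpace ℝ (Fin n)) (hu : ‖u‖ = 1) (c ρ : ℝ) (hρ : 0 < ρ) :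
    parallelBody n (twoPointSymm n u c X) ρ ⊆ twoPointSymm n u c (parallelBody n X ρ) ∧
    MeasureTheory.volume (parallelBody n (twoPointSymm n u c X) ρ) ≤
      MeasureTheory.volume (parallelBody n X ρ) := by
  have hinv := reflHyp_invol n u c hu
  have hiso : ∀ x z : EuclideanSpace ℝ (Fin n),
      dist (reflHyp n u c x) (reflHyp n u c z) = dist x z := by
    intro x z
    have hsq : dist (reflHyp n u c x) (reflHyp n u c z) ^ 2 = dist x z ^ 2 := by
      have h1 := dist_reflHyp_sq n u c hu (reflHyp n u c x) z
      have h2 := dist_reflHyp_sq n u c hu z x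
      have h3 := inner_reflHyp n u c hu x
      rw [dist_comm (reflHyp n u c x) z, h2, h3] at h1
      rw [h1, dist_comm z x]
      ring
    exact le_antisymm (sq_le_sq_nonneg' dist_nonneg dist_nonneg hsq.le)
      (sq_le_sq_nonneg' dist_nonneg dist_nonneg hsq.ge)
  have hdistle : ∀ x z : EuclideanSpace ℝ (Fin n),
      (⟪u, x⟫ - c) * (⟪u, z⟫ - c) ≤ 0 → dist x (reflHyp n u c z) ≤ dist x z := by
    intro x z h
    apply sq_le_sq_nonneg' dist_nonneg dist_nonneg
    rw [dist_reflHyp_sq n u c hu]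
    nlinarith
  have himg : ∀ (S : Set (EuclideanSpace ℝ (Fin n))) (x),
      x ∈ reflHyp n u c '' S ↔ reflHyp n u c x ∈ S := by
    intro S x
    constructor
    · rintro ⟨y, hy, rfl⟩; rwa [hinv y]
    · intro h; exact ⟨reflHyp n u c x, h, hinv x⟩
  have hsub : parallelBody n (twoPointSymm n u c X) ρ ⊆
      twoPointSymm n u c (parallelBody n X ρ) := by
    rintro z ⟨w, hw, hwz⟩
    simp only [twoPointSymm, Set.mem_union, Set.mem_inter_iff, Set.mem_setOf_eq] at hw ⊢
    rcases le_total c ⟪u, z⟫ with hz | hz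
    · refine Or.inl ⟨?_, hz⟩
      rcases hw with ⟨hw1, _⟩ | ⟨⟨hwX, _⟩, _⟩
      · rcases hw1 with hwX | hwσ
        · exact Or.inl ⟨w, hwX, hwz⟩
        · rw [himg] at hwσ
          exact Or.inr ((himg _ z).mpr ⟨reflHyp n u c w, hwσ, by rw [hiso]; exact hwz⟩)
      · exact Or.inl ⟨w, hwX, hwz⟩
    · refine Or.inr ⟨?_, hz⟩
      rcases hw with ⟨hw1, hw2⟩ | ⟨⟨hwX, hwσ⟩, _⟩
      · have hkey : (⟪u, w⟫ - c) * (⟪u, z⟫ - c) ≤ 0 := by nlinarith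
        have h1 : dist w (reflHyp n u c z) ≤ ρ := le_trans (hdistle w z hkey) hwz
        have h2 : dist (reflHyp n u c w) z ≤ ρ := by
          rw [dist_comm]
          refine le_trans (hdistle z w (by nlinarith)) ?_
          rw [dist_comm]; exact hwz
        rcases hw1 with hwX | hwσ
        · exact ⟨⟨w, hwX, hwz⟩, (himg _ z).mpr ⟨w, hwX, h1⟩⟩
        · rw [himg] at hwσ
          exact ⟨⟨reflHyp n u c w, hwσ, h2⟩,
            (himg _ z).mpr ⟨reflHyp n u c w, hwσ, by rw [hiso]; exact hwz⟩⟩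
      · rw [himg] at hwσ
        exact ⟨⟨w, hwX, hwz⟩,
          (himg _ z).mpr ⟨reflHyp n u c w, hwσ, by rw [hiso]; exact hwz⟩⟩
  refine ⟨hsub, le_trans (measure_mono hsub) ?_⟩
  set A := parallelBody n X ρ with hAdef
  have hAeq : A = X + Metric.closedBall (0 : EuclideanSpace ℝ (Fin n)) ρ := by
    ext z
    constructor
    · rintro ⟨x, hx, hd⟩
      refine Set.mem_add.mpr ⟨x, hx, z - x, ?_, by abel⟩
      rw [Metric.mem_closedBall, dist_zero_right, ← dist_eq_norm, dist_comm]
      exact hd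
    · intro hz
      rcases Set.mem_add.mp hz with ⟨x, hx, y, hy, rfl⟩
      refine ⟨x, hx, ?_⟩
      rw [dist_eq_norm, show x - (x + y) = -y by abel, norm_neg]
      rwa [Metric.mem_closedBall, dist_zero_right] at hy
  have hAc : IsCompact A := hAeq ▸ hX.add (isCompact_closedBall (0 : EuclideanSpace ℝ (Fin n)) ρ)
  have hAm : MeasurableSet A := hAc.measurableSet
  have hmp := reflHyp_measurePreserving n u c hu
  set B := reflHyp n u c ⁻¹' A with hBdef
  have hBm : MeasurableSet B := hAm.preimage hmp.measurable
  have hfm : Measurable fun x : EuclideanSpace ℝ (Fin n) => ⟪u, x⟫ :=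
    (Continuous.inner continuous_const continuous_id).measurable
  set P := {x : EuclideanSpace ℝ (Fin n) | c < ⟪u, x⟫} with hPdef
  set N := {x : EuclideanSpace ℝ (Fin n) | ⟪u, x⟫ < c} with hNdef
  have hPm : MeasurableSet P := measurableSet_lt measurable_const hfm
  have hNm : MeasurableSet N := measurableSet_lt hfm measurable_const
  have hpreN : reflHyp n u c ⁻¹' N = P := by
    ext x
    simp only [Set.mem_preimage, hNdef, hPdef, Set.mem_setOf_eq, inner_reflHyp n u c hu x]
    constructor <;> intro h <;> linarith
  have hpreP : reflHyp n u c ⁻¹' P = N := by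
    ext x
    simp only [Set.mem_preimage, hNdef, hPdef, Set.mem_setOf_eq, inner_reflHyp n u c hu x]
    constructor <;> intro h <;> linarith
  have hpreB : reflHyp n u c ⁻¹' B = A := by
    rw [hBdef, ← Set.preimage_comp, hinv.comp_self, Set.preimage_id]
  have himgB : reflHyp n u c '' A = B := by
    ext x
    rw [himg]
    rfl
  have hTP : twoPointSymm n u c A ∩ P ⊆ (A ∪ B) ∩ P := by
    rintro x ⟨hx, hxP⟩
    refine ⟨?_, hxP⟩
    rcases hx with ⟨h1, _⟩ | ⟨_, h2⟩
    · rcases h1 with h | h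
      · exact Or.inl h
      · exact Or.inr (himgB ▸ h)
    · exact absurd (show c < ⟪u, x⟫ from hxP) (not_lt.mpr h2)
  have hTN : twoPointSymm n u c A ∩ N ⊆ (A ∩ B) ∩ N := by
    rintro x ⟨hx, hxN⟩
    refine ⟨?_, hxN⟩
    rcases hx with ⟨_, h2⟩ | ⟨⟨h1, h2⟩, _⟩
    · exact absurd (show ⟪u, x⟫ < c from hxN) (not_lt.mpr h2)
    · exact ⟨h1, himgB ▸ h2⟩
  have hZ := hyperplane_volume_zero n u c hu
  have trich : twoPointSymm n u c A ⊆ (twoPointSymm n u c A ∩ P) ∪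
      ((twoPointSymm n u c A ∩ N) ∪ {x | ⟪u, x⟫ = c}) := by
    intro x hx
    rcases lt_trichotomy ⟪u, x⟫ c with h | h | h
    · exact Or.inr (Or.inl ⟨hx, h⟩)
    · exact Or.inr (Or.inr h)
    · exact Or.inl ⟨hx, h⟩
  calc volume (twoPointSymm n u c A)
      ≤ volume (twoPointSymm n u c A ∩ P) +
        (volume (twoPointSymm n u c A ∩ N) + volume {x : EuclideanSpace ℝ (Fin n) | ⟪u, x⟫ = c}) :=
        (measure_mono trich).trans ((measure_union_le _ _).trans
          (add_le_add le_rfl (measure_union_le _ _)))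
    _ = volume (twoPointSymm n u c A ∩ P) + volume (twoPointSymm n u c A ∩ N) := by
        rw [hZ, add_zero]
    _ ≤ volume ((A ∪ B) ∩ P) + volume ((A ∩ B) ∩ N) :=
        add_le_add (measure_mono hTP) (measure_mono hTN)
    _ = volume ((A ∪ B) ∩ P) + volume ((A ∩ B) ∩ P) := by
        congr 1
        have hset2 : reflHyp n u c ⁻¹' ((A ∩ B) ∩ N) = (A ∩ B) ∩ P := by
          rw [Set.preimage_inter, Set.preimage_inter, hpreB, hpreN, hBdef]
          rw [Set.inter_comm A (reflHyp n u c ⁻¹' A)]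
        rw [← hset2, hmp.measure_preimage (((hAm.inter hBm).inter hNm).nullMeasurableSet)]
    _ = volume (A ∩ P) + volume (B ∩ P) := by
        have e1 : (A ∪ B) ∩ P = (A ∩ P) ∪ (B ∩ P) := Set.union_inter_distrib_right A B P
        have e2 : (A ∩ B) ∩ P = (A ∩ P) ∩ (B ∩ P) := by
          ext x; simp only [Set.mem_inter_iff]; tauto
        rw [e1, e2]
        exact measure_union_add_inter _ (hBm.inter hPm)
    _ = volume (A ∩ P) + volume (A ∩ N) := by
        congr 1
        have hset3 : reflHyp n u c ⁻¹' (A ∩ N) = B ∩ P := by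
          rw [Set.preimage_inter, hpreN, hBdef]
        rw [← hset3]
        exact hmp.measure_preimage ((hAm.inter hNm).nullMeasurableSet)
    _ ≤ volume A := by
        have hd : Disjoint (A ∩ P) (A ∩ N) := by
          rw [Set.disjoint_left]
          rintro x ⟨_, h1⟩ ⟨_, h2⟩
          exact lt_asymm (show c < ⟪u, x⟫ from h1) (show ⟪u, x⟫ < c from h2)
        rw [← measure_union hd (hAm.inter hNm)]
        exact measure_mono (by rintro x (⟨h, _⟩ | ⟨h, _⟩) <;> exact h)
end
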